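/- The kernel of the cyclic symmetrization C on K⟨n⟩ equals K·1 + [K⟨n⟩, K⟨n⟩]: a polynomial P satisfies C P = 0 if and only if P is the sum of a scalar and a linear combination of commutators [a,b] = ab − ba with a, b ∈ K⟨n⟩. -/

import Mathlib

/-! Setup: the free associative algebra `K⟨X_1,…,X_n⟩` realized as the monoid
algebra of the free monoid on `Fin n`, together with the partial cyclic
derivatives `δ_j`, the number operator `N` and the cyclic symmetrization `C`. -/

noncomputable section

/-- `K⟨n⟩`, the ring of polynomials in `n` noncommuting indeterminates. -/
abbrev FreePoly (K : Type) [CommSemiring K] (n : ℕ) : Type :=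
  MonoidAlgebra K (FreeMonoid (Fin n))

/-- The monomial `X_{i_1} ⋯ X_{i_p}` associated to the word `w = [i_1,…,i_p]`. -/
def mono (K : Type) [Field K] {n : ℕ} (w : List (Fin n)) : FreePoly K n :=
  MonoidAlgebra.single (FreeMonoid.ofList w) 1

/-- The indeterminate `X k`. -/
def Xvar (K : Type) [Field K] {n : ℕ} (k : Fin n) : FreePoly K n := mono K [k]

variable {K : Type} [Field K] [CharZero K] {n : ℕ}

/-- The partial cyclic derivative `δ_j = μ̃ ∘ ∂_j`: on a monomial
`X_{i_0} ⋯ X_{i_s}` it gives `∑_{p : i_p = j} X_{i_{p+1}} ⋯ X_{i_s} X_{i_0} ⋯ X_{i_{p-1}}`. -/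
def cycDeriv (j : Fin n) : FreePoly K n →ₗ[K] FreePoly K n :=
  (Finsupp.lsum K fun w => LinearMap.toSpanSingleton K _
    (∑ p : Fin (FreeMonoid.toList w).length,
      if (FreeMonoid.toList w).get p = j then
        mono K ((FreeMonoid.toList w).drop (p + 1) ++ (FreeMonoid.toList w).take p)
      else 0)) ∘ₗ
    (MonoidAlgebra.coeffLinearEquiv K).toLinearMap

/-- The number operator `N`, multiplying a monomial by its degree. -/
def numOp : FreePoly K n →ₗ[K] FreePoly K n :=
  (Finsupp.lsum K fun w => LinearMap.toSpanSingleton K _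
    ((FreeMonoid.toList w).length • mono K (FreeMonoid.toList w))) ∘ₗ
    (MonoidAlgebra.coeffLinearEquiv K).toLinearMap

/-- The cyclic symmetrization `C`, sending a monomial of degree `p ≥ 1` to the
sum of its `p` cyclic rotations (and `1` to `0`). -/
def cycSym : FreePoly K n →ₗ[K] FreePoly K n :=
  (Finsupp.lsum K fun w => LinearMap.toSpanSingleton K _
    (∑ p ∈ Finset.range (FreeMonoid.toList w).length,
      mono K ((FreeMonoid.toList w).rotate (p + 1)))) ∘ₗ
    (MonoidAlgebra.coeffLinearEquiv K).toLinearMap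

/-!
Every rotation of a monomial differs from it by a commutator, so a monomial `w` of degree
`d ≥ 1` is congruent to `d⁻¹ C w` modulo `[K⟨n⟩, K⟨n⟩]`. As `C` preserves degree, this says
`P ∈ K·1 + N⁻¹ (C P) + [K⟨n⟩, K⟨n⟩]` for every `P`, which gives one inclusion. Conversely
`C 1 = 0` and `C (ab) = C (ba)`, because `vu` is a rotation of `uv` and `C` is invariant
under rotation of monomials.
-/

omit [CharZero K] in
theorem mono_nil : mono K ([] : List (Fin n)) = 1 := rfl

omit [CharZero K] in
theorem mono_mul (u v : List (Fin n)) : mono K u * mono K v = mono K (u ++ v) := by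
  simp [mono, MonoidAlgebra.single_mul_single, FreeMonoid.ofList_append]

omit [CharZero K] in
theorem span_range_mono : Submodule.span K (Set.range (mono K (n := n))) = ⊤ := by
  rw [← (MonoidAlgebra.basis (FreeMonoid (Fin n)) K).span_eq]
  exact congrArg _ (FreeMonoid.ofList.surjective.range_comp (MonoidAlgebra.basis _ K))

omit [CharZero K] in
theorem cycSym_mono (w : List (Fin n)) :
    cycSym (mono K w) = ∑ p ∈ Finset.range w.length, mono K (w.rotate (p + 1)) := by
  simp [cycSym, mono]

omit [CharZero K] in
theorem cycSym_one : cycSym (1 : FreePoly K n) = 0 :=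
  cycSym_mono (K := K) (n := n) []

omit [CharZero K] in
theorem cycSym_mono_rotate_one (w : List (Fin n)) :
    cycSym (mono K (w.rotate 1)) = cycSym (mono K w) := by
  set f : ℕ → FreePoly K n := fun p => mono K (w.rotate p)
  have hperiod : f (w.length + 1) = f 1 := by simp [f, ← List.rotate_mod w (w.length + 1)]
  have hshift := Finset.sum_range_succ' (fun p => f (p + 1)) w.length
  rw [Finset.sum_range_succ, hperiod] at hshift
  simpa [cycSym_mono, f, List.rotate_rotate, add_comm 1] using (add_right_cancel hshift).symm

omit [CharZero K] in
theorem cycSym_mono_rotate (w : List (Fin n)) (k : ℕ) :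
    cycSym (mono K (w.rotate k)) = cycSym (mono K w) := by
  induction k with
  | zero => rw [List.rotate_zero]
  | succ k ih => rw [← List.rotate_rotate, cycSym_mono_rotate_one, ih]

omit [CharZero K] in
theorem cycSym_mul_comm (a b : FreePoly K n) : cycSym (a * b) = cycSym (b * a) := by
  have h : (LinearMap.mul K (FreePoly K n)).compr₂ cycSym =
      (LinearMap.mul K (FreePoly K n)).flip.compr₂ cycSym := by
    ext u v : 4
    change cycSym (mono K u.toList * mono K v.toList) = cycSym (mono K v.toList * mono K u.toList)
    rw [mono_mul, mono_mul, ← List.rotate_append_length_eq, cycSym_mono_rotate]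
  exact LinearMap.congr_fun₂ h a b

abbrev commutatorSpan (R A : Type*) [CommSemiring R] [Ring A] [Module R A] : Submodule R A :=
  Submodule.span R {x | ∃ a b : A, x = a * b - b * a}

omit [CharZero K] in
theorem mono_sub_mono_rotate_mem (w : List (Fin n)) (k : ℕ) :
    mono K w - mono K (w.rotate k) ∈ commutatorSpan K (FreePoly K n) := by
  set m := k % w.length
  have h : mono K (w.take m) * mono K (w.drop m) - mono K (w.drop m) * mono K (w.take m) ∈
      commutatorSpan K (FreePoly K n) := Submodule.subset_span ⟨_, _, rfl⟩
  rwa [mono_mul, mono_mul, List.take_append_drop, ← List.rotate_eq_drop_append_take_mod] at h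

omit [CharZero K] in
theorem scalars_sup_commutatorSpan_le_ker_cycSym :
    Submodule.span K {1} ⊔ commutatorSpan K (FreePoly K n) ≤ LinearMap.ker cycSym := by
  refine sup_le ?_ ?_ <;> rw [Submodule.span_le]
  · simpa using cycSym_one
  · rintro _ ⟨a, b, rfl⟩
    simp [cycSym_mul_comm a b]

omit [CharZero K] in
/-- The inverse of the number operator `numOp` in positive degrees; since `(0 : K)⁻¹ = 0` it
kills the constants. -/
def invNumOp : FreePoly K n →ₗ[K] FreePoly K n :=
  (Finsupp.lsum K fun w => LinearMap.toSpanSingleton K _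
    (((FreeMonoid.toList w).length : K)⁻¹ • mono K (FreeMonoid.toList w))) ∘ₗ
    (MonoidAlgebra.coeffLinearEquiv K).toLinearMap

omit [CharZero K] in
theorem invNumOp_mono (w : List (Fin n)) :
    invNumOp (mono K w) = (w.length : K)⁻¹ • mono K w := by
  simp [invNumOp, mono]

theorem mono_sub_invNumOp_cycSym_mem (w : List (Fin n)) :
    mono K w - invNumOp (cycSym (mono K w)) ∈
      Submodule.span K {1} ⊔ commutatorSpan K (FreePoly K n) := by
  rcases eq_or_ne w [] with rfl | hw
  · simpa [mono_nil, cycSym_one] using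
      Submodule.mem_sup_left (Submodule.mem_span_singleton_self (R := K) (1 : FreePoly K n))
  · have hlen : (w.length : K) ≠ 0 := Nat.cast_ne_zero.mpr (List.length_pos_iff.mpr hw).ne'
    have hmono : mono K w = (w.length : K)⁻¹ • ∑ _p ∈ Finset.range w.length, mono K w := by
      rw [Finset.sum_const, Finset.card_range, ← Nat.cast_smul_eq_nsmul K, inv_smul_smul₀ hlen]
    rw [cycSym_mono, map_sum]
    simp only [invNumOp_mono, List.length_rotate]
    rw [← Finset.smul_sum]
    nth_rewrite 1 [hmono]
    rw [← smul_sub, ← Finset.sum_sub_distrib]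
    exact Submodule.mem_sup_right
      (Submodule.smul_mem _ _ (Submodule.sum_mem _ fun p _ => mono_sub_mono_rotate_mem w (p + 1)))

theorem sub_invNumOp_cycSym_mem (P : FreePoly K n) :
    P - invNumOp (cycSym P) ∈ Submodule.span K {1} ⊔ commutatorSpan K (FreePoly K n) := by
  have h : Submodule.span K (Set.range (mono K)) ≤
      (Submodule.span K {1} ⊔ commutatorSpan K (FreePoly K n)).comap
        (LinearMap.id - invNumOp ∘ₗ cycSym) := by
    rw [Submodule.span_le]
    rintro _ ⟨w, rfl⟩
    exact mono_sub_invNumOp_cycSym_mem w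
  rw [span_range_mono] at h
  exact h Submodule.mem_top

theorem cycSym_eq_zero_iff_mem_scalars_sup_commutators (P : FreePoly K n) :
    cycSym P = 0 ↔
      P ∈ Submodule.span K {(1 : FreePoly K n)} ⊔
        Submodule.span K {x : FreePoly K n | ∃ a b : FreePoly K n, x = a * b - b * a} := by
  constructor
  · intro h
    simpa [h] using sub_invNumOp_cycSym_mem P
  · exact fun hP => scalars_sup_commutatorSpan_le_ker_cycSym hP
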